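/- For third-order tensors A, B of compatible sizes, the block-diagonalized DFT of the t-product equals the matrix product of the block-diagonalized DFTs: blockdiag(fft₃(A * B)) = blockdiag(fft₃(A)) · blockdiag(fft₃(B)). -/
import Mathlib

/-- Circular convolution of complex tubes. -/
noncomputable def cconv {n : ℕ} [NeZero n] (x y : ZMod n → ℂ) : ZMod n → ℂ :=
  fun k => ∑ j : ZMod n, x j * y (k - j)

/-- Unnormalized DFT along a tube: `DFT(x)_m = Σ_k x_k ω^{mk}`, `ω = exp(-2πi/n)`. -/
noncomputable def dft {n : ℕ} [NeZero n] (x : ZMod n → ℂ) : ZMod n → ℂ :=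
  fun m => ∑ k : ZMod n, x k * Complex.exp (-2 * Real.pi * Complex.I / n) ^ (m.val * k.val)

/-- The t-product of third-order complex tensors. -/
noncomputable def tProd {n₁ n₂ n₄ n₃ : ℕ} [NeZero n₃]
    (A : Fin n₁ → Fin n₂ → ZMod n₃ → ℂ) (B : Fin n₂ → Fin n₄ → ZMod n₃ → ℂ) :
    Fin n₁ → Fin n₄ → ZMod n₃ → ℂ :=
  fun i j t => ∑ k : Fin n₂, cconv (A i k) (B k j) t

/-- `fft₃`: DFT along the third index of a tensor. -/
noncomputable def fft3 {n₁ n₂ n₃ : ℕ} [NeZero n₃] (A : Fin n₁ → Fin n₂ → ZMod n₃ → ℂ) :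
    Fin n₁ → Fin n₂ → ZMod n₃ → ℂ :=
  fun i j => dft (A i j)

/-- Block-diagonal matrix whose `k`-th diagonal block is the `k`-th frontal slice. -/
noncomputable def blockdiag {n₁ n₂ n₃ : ℕ} [NeZero n₃] (A : Fin n₁ → Fin n₂ → ZMod n₃ → ℂ) :
    Matrix (Fin n₁ × ZMod n₃) (Fin n₂ × ZMod n₃) ℂ :=
  fun p q => if p.2 = q.2 then A p.1 q.1 p.2 else 0

lemma pow_eq_pow_of_mod {n : ℕ} (z : ℂ) (hz : z ^ n = 1) {a b : ℕ} (h : a % n = b % n) :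
    z ^ a = z ^ b := by
  conv_lhs => rw [← Nat.div_add_mod a n, pow_add, pow_mul, hz, one_pow, one_mul, h]
  conv_rhs => rw [← Nat.div_add_mod b n, pow_add, pow_mul, hz, one_pow, one_mul]

lemma omega_pow_n {n : ℕ} [NeZero n] :
    Complex.exp (-2 * Real.pi * Complex.I / n) ^ n = 1 := by
  rw [← Complex.exp_nat_mul]
  have hn : (n : ℂ) ≠ 0 := Nat.cast_ne_zero.mpr (NeZero.ne n)
  rw [mul_div_cancel₀ _ hn]
  have : (-2 : ℂ) * Real.pi * Complex.I = -(2 * Real.pi * Complex.I) := by ring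
  rw [this, Complex.exp_neg, Complex.exp_two_pi_mul_I, inv_one]

lemma dft_cconv {n : ℕ} [NeZero n] (x y : ZMod n → ℂ) (m : ZMod n) :
    dft (cconv x y) m = dft x m * dft y m := by
  unfold dft cconv
  rw [Finset.sum_mul_sum]
  simp only [Finset.sum_mul]
  rw [Finset.sum_comm]
  refine Finset.sum_congr rfl fun j _ => ?_
  rw [← Equiv.sum_comp (Equiv.addLeft j) (fun k => x j * y (k - j) *
    Complex.exp (-2 * Real.pi * Complex.I / n) ^ (m.val * k.val))]
  refine Finset.sum_congr rfl fun t _ => ?_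
  simp only [Equiv.coe_addLeft]
  have h1 : j + t - j = t := by ring
  rw [h1]
  have h2 : Complex.exp (-2 * Real.pi * Complex.I / n) ^ (m.val * (j + t).val)
      = Complex.exp (-2 * Real.pi * Complex.I / n) ^ (m.val * j.val)
        * Complex.exp (-2 * Real.pi * Complex.I / n) ^ (m.val * t.val) := by
    rw [← pow_add]
    apply pow_eq_pow_of_mod _ omega_pow_n
    have hJT : (j + t).val ≡ j.val + t.val [MOD n] := by
      rw [ZMod.val_add]; exact (Nat.mod_modEq _ n)
    have := hJT.mul_left m.val
    rw [Nat.mul_add] at this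
    exact this
  rw [h2]; ring

/-- The block-diagonalized DFT of the t-product equals the matrix product of the
block-diagonalized DFTs. -/
theorem blockdiag_fft3_tprod {n₁ n₂ n₄ n₃ : ℕ} [NeZero n₃]
    (A : Fin n₁ → Fin n₂ → ZMod n₃ → ℂ) (B : Fin n₂ → Fin n₄ → ZMod n₃ → ℂ) :
    blockdiag (fft3 (tProd A B)) = blockdiag (fft3 A) * blockdiag (fft3 B) := by
  ext p q
  simp only [Matrix.mul_apply, blockdiag, fft3, tProd]
  rw [Fintype.sum_prod_type]
  by_cases h : p.2 = q.2
  · simp only [h, if_true]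
    have : (dft (tProd A B p.1 q.1) q.2)
        = ∑ k : Fin n₂, dft (cconv (A p.1 k) (B k q.1)) q.2 := by
      unfold dft tProd
      rw [Finset.sum_comm]
      simp [Finset.sum_mul]
    rw [this]
    refine Finset.sum_congr rfl fun k _ => ?_
    rw [dft_cconv]
    rw [Finset.sum_eq_single q.2]
    · simp [h]
    · intro s _ hs
      simp [hs, Ne.symm hs]
    · simp
  · simp only [h, if_false]
    symm
    apply Finset.sum_eq_zero
    intro k _
    apply Finset.sum_eq_zero
    intro s _
    by_cases hs : p.2 = s
    · subst hs; simp [h]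
    · simp [hs]
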